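/- arXiv:2006.13632 — 2 statements merged into one kernel-verified Lean document; each statement's English description precedes it below -/
import Mathlib

section
/- Let n ≥ 4 and 2 ≤ k ≤ n−1. Set A_{k,k} = B_{k−1,k} = {G ∈ M_{n−2}(K_n) : {i,i+1} ∉ G for every i ∈ [k−1], deg_G(1) = n−2, deg_G(i) = n−3 for every i ∈ {2,...,k−1}, and deg_G(k) < n−2}, and for i = k+1,...,n define N_{k,i} = {G ∈ A_{k,i−1} : G ∖ {{k,i}} ∈ A_{k,i−1} and G ∪ {{k,i}} ∈ A_{k,i−1}} and A_{k,i} = A_{k,i−1} ∖ N_{k,i}. Then A_{k,n} = B_{k,k+1} ⊔ C_k, a disjoint union, where B_{k,k+1} = {G ∈ A_{k,k} : {k,k+1} ∉ G, deg_G(k+1) < n−2, deg_G(k) = n−3} and C_k = {G ∈ A_{k,k} : for every i ∈ {k+1,...,n}, {k,i} ∉ G and deg_G(i) = n−2}. -/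
/-!
Write `C_{k,i}` for the cells of `A_{k,k}` that, for every `k < j ≤ i`, avoid the edge `{k,j}` and
have `deg j = n-2`; thus `C_{k,k} = A_{k,k}` and `C_{k,n} = C_k`. By induction on `i`,
`A_{k,i} = B_{k,k+1} ∪ C_{k,i}`. In the step with the edge `e = {k,i+1}`:
* a cell of `B_{k,k+1}` survives, since adding `e` raises `deg k` to `n-2`, while removing it
  breaks both `deg k = n-3` and, for `i > k`, the condition `deg (k+1) = n-2` of `C_{k,i}`;
* a cell of `C_{k,i}` containing `e` is matched with its erasure;
* a cell of `C_{k,i}` avoiding `e` with `deg (i+1) = n-2` survives, as `e` cannot be added;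
* any other cell of `C_{k,i}` is matched with its insertion: `k` already misses the
  neighbours `k-1, k, …, i+1`, so `deg k ≤ n-4` when `i > k`, and for `i = k` the cell is not
  in `B_{k,k+1}`.
-/

/-- Degree of vertex `v` in the edge set `H`. -/
def deg (H : Finset (Sym2 ℕ)) (v : ℕ) : ℕ := (H.filter (fun e => v ∈ e)).card

/-- Edge set of the complete graph `K_n` on vertex set `{1,…,n}`. -/
def EK (n : ℕ) : Finset (Sym2 ℕ) := (Finset.Icc 1 n).sym2.filter (fun e => ¬ e.IsDiag)

/-- The `r`-matching complex of `K_n`, as its set of faces. -/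
def MK (n r : ℕ) : Set (Finset (Sym2 ℕ)) := {H | H ⊆ EK n ∧ ∀ v, deg H v ≤ r}

section Degree

variable {G H : Finset (Sym2 ℕ)} {e : Sym2 ℕ} {v : ℕ}

lemma deg_mono (h : G ⊆ H) (v : ℕ) : deg G v ≤ deg H v :=
  Finset.card_le_card (Finset.filter_subset_filter _ h)

lemma deg_erase_of_notMem (hv : v ∉ e) : deg (G.erase e) v = deg G v := by
  rw [deg, Finset.filter_erase, Finset.erase_eq_of_notMem (by simp [hv]), deg]

lemma deg_insert_of_notMem (hv : v ∉ e) : deg (insert e G) v = deg G v := by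
  rw [deg, Finset.filter_insert, if_neg hv, deg]

lemma deg_insert_of_mem (he : e ∉ G) (hv : v ∈ e) : deg (insert e G) v = deg G v + 1 := by
  rw [deg, Finset.filter_insert, if_pos hv, Finset.card_insert_of_notMem (by simp [he]), deg]

lemma deg_erase_add_one (he : e ∈ G) (hv : v ∈ e) : deg (G.erase e) v + 1 = deg G v := by
  rw [deg, Finset.filter_erase, Finset.card_erase_add_one (by simp [he, hv]), deg]

/-- A vertex of a subgraph of `K_n` has no neighbours outside `[n]`. -/
lemma deg_le_sub_card {n : ℕ} (hG : G ⊆ EK n) {S : Finset ℕ} (hS : S ⊆ Finset.Icc 1 n)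
    (h : ∀ j ∈ S, s(v, j) ∉ G) : deg G v ≤ n - S.card := by
  have hsub : G.filter (v ∈ ·) ⊆ (Finset.Icc 1 n \ S).image (s(v, ·)) := by
    intro e he
    obtain ⟨heG, hve⟩ := Finset.mem_filter.mp he
    obtain ⟨w, rfl⟩ := (Sym2.mem_iff_exists).mp hve
    have hw : w ∈ Finset.Icc 1 n :=
      (Finset.mk_mem_sym2_iff.mp (Finset.mem_filter.mp (hG heG)).1).2
    exact Finset.mem_image.mpr ⟨w, Finset.mem_sdiff.mpr ⟨hw, fun hwS => h w hwS heG⟩, rfl⟩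
  calc deg G v ≤ ((Finset.Icc 1 n \ S).image (s(v, ·))).card := Finset.card_le_card hsub
    _ ≤ (Finset.Icc 1 n \ S).card := Finset.card_image_le
    _ = n - S.card := by rw [Finset.card_sdiff_of_subset hS, Nat.card_Icc, Nat.add_sub_cancel]

end Degree

lemma mk_mem_EK {n a b : ℕ} (ha : a ∈ Finset.Icc 1 n) (hb : b ∈ Finset.Icc 1 n)
    (hab : a ≠ b) : s(a, b) ∈ EK n := by
  rw [EK, Finset.mem_filter, Finset.mk_mem_sym2_iff, Sym2.mk_isDiag_iff]
  exact ⟨⟨ha, hb⟩, hab⟩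

lemma diag_notMem_of_subset_EK {n k : ℕ} {G : Finset (Sym2 ℕ)} (hG : G ⊆ EK n) :
    s(k, k) ∉ G := fun h => (Finset.mem_filter.mp (hG h)).2 (Sym2.mk_isDiag_iff.mpr rfl)

/-- The paper's `A_{k,i} = A_{k,i-1} ∖ N_{k,i}` is `matchStep A_{k,i-1} {k,i}`. -/
def matchStep {α : Type*} [DecidableEq α] (X : Set (Finset α)) (e : α) : Set (Finset α) :=
  X \ {G ∈ X | G.erase e ∈ X ∧ insert e G ∈ X}

lemma mem_matchStep_iff {α : Type*} [DecidableEq α] {X : Set (Finset α)} {e : α}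
    {G : Finset α} :
    G ∈ matchStep X e ↔ G ∈ X ∧ (G.erase e ∈ X → insert e G ∉ X) := by
  simp only [matchStep, Set.mem_sdiff, Set.mem_ofPred_eq]
  tauto

section Cells

variable {n k i j : ℕ} {G : Finset (Sym2 ℕ)}

/-- `A_{k,k} = B_{k-1,k}`. -/
def Akk (n k : ℕ) : Set (Finset (Sym2 ℕ)) :=
  {G ∈ MK n (n - 2) | (∀ i ∈ Finset.Icc 1 (k - 1), s(i, i + 1) ∉ G) ∧
    deg G 1 = n - 2 ∧ (∀ i ∈ Finset.Icc 2 (k - 1), deg G i = n - 3) ∧ deg G k < n - 2}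

/-- `B_{k,k+1}`. -/
def Bk (n k : ℕ) : Set (Finset (Sym2 ℕ)) :=
  {G ∈ Akk n k | s(k, k + 1) ∉ G ∧ deg G (k + 1) < n - 2 ∧ deg G k = n - 3}

/-- `C_{k,i}`; `Ck n k n` is the paper's `C_k` and `Ck n k k = Akk n k`. -/
def Ck (n k i : ℕ) : Set (Finset (Sym2 ℕ)) :=
  {G ∈ Akk n k | ∀ j ∈ Finset.Icc (k + 1) i, s(k, j) ∉ G ∧ deg G j = n - 2}

lemma Bk_subset_Akk : Bk n k ⊆ Akk n k := fun _ hG => hG.1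

lemma Ck_subset_Akk : Ck n k i ⊆ Akk n k := fun _ hG => hG.1

lemma Ck_self : Ck n k k = Akk n k := by
  ext G
  simp [Ck]

lemma mem_Ck_succ_iff (hki : k ≤ i) :
    G ∈ Ck n k (i + 1) ↔ G ∈ Ck n k i ∧ s(k, i + 1) ∉ G ∧ deg G (i + 1) = n - 2 := by
  have hIcc : Finset.Icc (k + 1) (i + 1) = insert (i + 1) (Finset.Icc (k + 1) i) :=
    (Finset.insert_Icc_right_eq_Icc_add_one (by omega)).symm
  simp only [Ck, Set.mem_ofPred_eq, hIcc, Finset.forall_mem_insert]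
  tauto

lemma disjoint_Bk_Ck (hki : k < i) : Disjoint (Bk n k) (Ck n k i) :=
  Set.disjoint_left.mpr fun _ hB hC =>
    (hB.2.2.1.ne (hC.2 (k + 1) (Finset.mem_Icc.mpr ⟨le_rfl, hki⟩)).2)

lemma erase_mem_Akk (hk : 2 ≤ k) (hkj : k < j) (hG : G ∈ Akk n k) :
    G.erase s(k, j) ∈ Akk n k := by
  obtain ⟨⟨hEK, hdeg⟩, hpath, h1, hmid, hdk⟩ := hG
  have hsub := Finset.erase_subset s(k, j) G
  refine ⟨⟨hsub.trans hEK, fun v => (deg_mono hsub v).trans (hdeg v)⟩,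
    fun i hi hmem => hpath i hi (hsub hmem), ?_, fun i hi => ?_,
    (deg_mono hsub k).trans_lt hdk⟩
  · rwa [deg_erase_of_notMem (by rw [Sym2.mem_iff]; omega)]
  · rw [Finset.mem_Icc] at hi
    rw [deg_erase_of_notMem (by rw [Sym2.mem_iff]; omega)]
    exact hmid i (Finset.mem_Icc.mpr hi)

lemma insert_mem_Akk (hk : 2 ≤ k) (hkj : k < j) (hjn : j ≤ n) (hG : G ∈ Akk n k)
    (he : s(k, j) ∉ G) (hdj : deg G j < n - 2) (hdk : deg G k + 1 < n - 2) :
    insert s(k, j) G ∈ Akk n k := by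
  obtain ⟨⟨hEK, hdeg⟩, hpath, h1, hmid, -⟩ := hG
  refine ⟨⟨Finset.insert_subset (mk_mem_EK ?_ ?_ hkj.ne) hEK, fun v => ?_⟩,
    fun i hi hmem => ?_, ?_, fun i hi => ?_, ?_⟩
  · rw [Finset.mem_Icc]; omega
  · rw [Finset.mem_Icc]; omega
  · by_cases hv : v ∈ s(k, j)
    · rw [deg_insert_of_mem he hv]
      rcases Sym2.mem_iff.mp hv with rfl | rfl <;> omega
    · rw [deg_insert_of_notMem hv]
      exact hdeg v
  · rw [Finset.mem_Icc] at hi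
    rcases Finset.mem_insert.mp hmem with heq | hmem
    · rw [Sym2.eq_iff] at heq; omega
    · exact hpath i (Finset.mem_Icc.mpr hi) hmem
  · rwa [deg_insert_of_notMem (by rw [Sym2.mem_iff]; omega)]
  · rw [Finset.mem_Icc] at hi
    rw [deg_insert_of_notMem (by rw [Sym2.mem_iff]; omega)]
    exact hmid i (Finset.mem_Icc.mpr hi)
  · rw [deg_insert_of_mem he (Sym2.mem_mk_left k j)]
    exact hdk

lemma erase_mem_Ck (hk : 2 ≤ k) (hkj : k < j) (hij : i < j) (hG : G ∈ Ck n k i) :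
    G.erase s(k, j) ∈ Ck n k i := by
  refine ⟨erase_mem_Akk hk hkj hG.1, fun l hl => ?_⟩
  obtain ⟨hl_notMem, hl_deg⟩ := hG.2 l hl
  rw [Finset.mem_Icc] at hl
  exact ⟨fun h => hl_notMem (Finset.mem_of_mem_erase h),
    by rwa [deg_erase_of_notMem (by rw [Sym2.mem_iff]; omega)]⟩

lemma insert_mem_Ck (hk : 2 ≤ k) (hkj : k < j) (hij : i < j) (hjn : j ≤ n)
    (hG : G ∈ Ck n k i) (he : s(k, j) ∉ G) (hdj : deg G j < n - 2) (hdk : deg G k + 1 < n - 2) :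
    insert s(k, j) G ∈ Ck n k i := by
  refine ⟨insert_mem_Akk hk hkj hjn hG.1 he hdj hdk, fun l hl => ?_⟩
  obtain ⟨hl_notMem, hl_deg⟩ := hG.2 l hl
  rw [Finset.mem_Icc] at hl
  refine ⟨fun h => ?_, by rwa [deg_insert_of_notMem (by rw [Sym2.mem_iff]; omega)]⟩
  rcases Finset.mem_insert.mp h with heq | h
  · rw [Sym2.eq_iff] at heq; omega
  · exact hl_notMem h

/-- `k` misses the neighbours `k-1, k, …, i+1`, so `deg k ≤ n - (i - k + 3)`. -/
lemma deg_add_le_of_mem_Ck (hk : 2 ≤ k) (hki : k ≤ i) (hin : i + 1 ≤ n) (hG : G ∈ Ck n k i)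
    (he : s(k, i + 1) ∉ G) : deg G k + (i + 3) ≤ n + k := by
  have havoid : ∀ j ∈ Finset.Icc (k - 1) (i + 1), s(k, j) ∉ G := by
    intro j hj
    rw [Finset.mem_Icc] at hj
    rcases (show j = k - 1 ∨ j = k ∨ j ∈ Finset.Icc (k + 1) i ∨ j = i + 1 by
      rw [Finset.mem_Icc]; omega) with rfl | rfl | hj | rfl
    · rw [Sym2.eq_swap]
      simpa [Nat.sub_add_cancel (by omega : 1 ≤ k)] using
        hG.1.2.1 (k - 1) (Finset.mem_Icc.mpr ⟨by omega, le_rfl⟩)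
    · exact diag_notMem_of_subset_EK hG.1.1.1
    · exact (hG.2 j hj).1
    · exact he
  have := deg_le_sub_card hG.1.1.1 (fun x hx => by simp only [Finset.mem_Icc] at hx ⊢; omega)
    havoid
  rw [Nat.card_Icc] at this
  omega

lemma Bk_union_Ck_subset_Akk : Bk n k ∪ Ck n k i ⊆ Akk n k :=
  Set.union_subset Bk_subset_Akk Ck_subset_Akk

lemma mem_matchStep_of_mem_Bk (hki : k ≤ i) (hG : G ∈ Bk n k) :
    G ∈ matchStep (Bk n k ∪ Ck n k i) s(k, i + 1) := by
  refine mem_matchStep_iff.mpr ⟨Or.inl hG, fun herase hinsert => ?_⟩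
  obtain ⟨-, hkk1, hdk1, hdk⟩ := hG
  by_cases he : s(k, i + 1) ∈ G
  · have hdk' := deg_erase_add_one he (Sym2.mem_mk_left k (i + 1))
    have hik : k < i := hki.lt_of_ne (by rintro rfl; exact hkk1 he)
    rcases herase with hB | hC
    · exact absurd hB.2.2.2 (by omega)
    · have := (hC.2 (k + 1) (Finset.mem_Icc.mpr ⟨le_rfl, hik⟩)).2
      rw [deg_erase_of_notMem (by rw [Sym2.mem_iff]; omega)] at this
      omega
  · have := (Bk_union_Ck_subset_Akk hinsert).2.2.2.2
    rw [deg_insert_of_mem he (Sym2.mem_mk_left k (i + 1))] at this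
    omega

lemma mem_matchStep_of_mem_Ck_succ (hki : k ≤ i) (hG : G ∈ Ck n k (i + 1)) :
    G ∈ matchStep (Bk n k ∪ Ck n k i) s(k, i + 1) := by
  obtain ⟨hC, he, hdeg⟩ := (mem_Ck_succ_iff hki).mp hG
  refine mem_matchStep_iff.mpr ⟨Or.inr hC, fun _ hinsert => ?_⟩
  have := (Bk_union_Ck_subset_Akk hinsert).1.2 (i + 1)
  rw [deg_insert_of_mem he (Sym2.mem_mk_right k (i + 1))] at this
  omega

lemma mem_Bk_union_Ck_succ_of_mem_matchStep (hk : 2 ≤ k) (hki : k ≤ i) (hin : i + 1 ≤ n)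
    (hG : G ∈ matchStep (Bk n k ∪ Ck n k i) s(k, i + 1)) : G ∈ Bk n k ∪ Ck n k (i + 1) := by
  obtain ⟨hB | hC, hmatch⟩ := mem_matchStep_iff.mp hG
  · exact Or.inl hB
  by_cases hB : G ∈ Bk n k
  · exact Or.inl hB
  right
  by_cases he : s(k, i + 1) ∈ G
  · refine absurd ?_ (hmatch (Or.inr (erase_mem_Ck hk (by omega) (by omega) hC)))
    rw [Finset.insert_eq_of_mem he]
    exact Or.inr hC
  have hdeg_le := hC.1.1.2 (i + 1)
  by_cases hdeg : deg G (i + 1) = n - 2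
  · exact (mem_Ck_succ_iff hki).mpr ⟨hC, he, hdeg⟩
  have hdk : deg G k + 1 < n - 2 := by
    have hbound := deg_add_le_of_mem_Ck hk hki hin hC he
    have hdk_lt := hC.1.2.2.2.2
    rcases hki.lt_or_eq with hik | rfl
    · omega
    · have : deg G k ≠ n - 3 := fun h => hB ⟨hC.1, he, by omega, h⟩
      omega
  refine absurd (Or.inr (insert_mem_Ck hk (by omega) (by omega) hin hC he (by omega) hdk))
    (hmatch ?_)
  rw [Finset.erase_eq_of_notMem he]
  exact Or.inr hC

lemma matchStep_Bk_union_Ck (hk : 2 ≤ k) (hki : k ≤ i) (hin : i + 1 ≤ n) :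
    matchStep (Bk n k ∪ Ck n k i) s(k, i + 1) = Bk n k ∪ Ck n k (i + 1) :=
  Set.Subset.antisymm (fun _ => mem_Bk_union_Ck_succ_of_mem_matchStep hk hki hin)
    (Set.union_subset (fun _ => mem_matchStep_of_mem_Bk hki)
      (fun _ => mem_matchStep_of_mem_Ck_succ hki))

end Cells

lemma eq_Bk_union_Ck {n k : ℕ} (hk : 2 ≤ k) (A : ℕ → Set (Finset (Sym2 ℕ)))
    (hA : A k = Akk n k)
    (hstep : ∀ i, k + 1 ≤ i → i ≤ n → A i = matchStep (A (i - 1)) s(k, i))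
    {i : ℕ} (hki : k ≤ i) (hin : i ≤ n) : A i = Bk n k ∪ Ck n k i := by
  induction i, hki using Nat.le_induction with
  | base => rw [hA, Ck_self, Set.union_eq_self_of_subset_left Bk_subset_Akk]
  | succ i hki ih =>
    rw [hstep (i + 1) (by omega) hin, Nat.add_sub_cancel, ih (by omega),
      matchStep_Bk_union_Ck hk hki hin]

theorem step_k_critical_cells_general (n k : ℕ) (hk : 2 ≤ k) (hkn : k ≤ n - 1)
    (A : ℕ → Set (Finset (Sym2 ℕ)))
    (hAk : A k = {G ∈ MK n (n - 2) | (∀ i ∈ Finset.Icc 1 (k - 1), s(i, i + 1) ∉ G) ∧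
      deg G 1 = n - 2 ∧ (∀ i ∈ Finset.Icc 2 (k - 1), deg G i = n - 3) ∧
      deg G k < n - 2})
    (hstep : ∀ i, k + 1 ≤ i → i ≤ n →
      A i = A (i - 1) \
        {G ∈ A (i - 1) | G.erase s(k, i) ∈ A (i - 1) ∧ insert s(k, i) G ∈ A (i - 1)}) :
    let B : Set (Finset (Sym2 ℕ)) :=
      {G ∈ A k | s(k, k + 1) ∉ G ∧ deg G (k + 1) < n - 2 ∧ deg G k = n - 3}
    let C : Set (Finset (Sym2 ℕ)) :=
      {G ∈ A k | ∀ i ∈ Finset.Icc (k + 1) n, s(k, i) ∉ G ∧ deg G i = n - 2}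
    A n = B ∪ C ∧ Disjoint B C := by
  intro B C
  have hA : A k = Akk n k := hAk
  have hB : B = Bk n k := by simp only [B, hA]; rfl
  have hC : C = Ck n k n := by simp only [C, hA]; rfl
  rw [hB, hC]
  exact ⟨eq_Bk_union_Ck hk A hA hstep (by omega) le_rfl, disjoint_Bk_Ck (by omega)⟩

/-- Proposition 3.6(2) (Step k): starting from `A_{k,k} = B_{k-1,k}` and performing,
for `i = k+1, …, n`, the element matching using the vertex `{k,i}` (removing
`N_{k,i} = {G ∈ A_{k,i-1} : G - {k,i} ∈ A_{k,i-1} and G + {k,i} ∈ A_{k,i-1}}`),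
the remaining set of critical cells is `A_{k,n} = B_{k,k+1} ⊔ C_k`. -/
theorem step_k_critical_cells (n k : ℕ) (hn : 4 ≤ n) (hk : 2 ≤ k) (hkn : k ≤ n - 1)
    (A : ℕ → Set (Finset (Sym2 ℕ)))
    (hAk : A k = {G ∈ MK n (n - 2) | (∀ i ∈ Finset.Icc 1 (k - 1), s(i, i + 1) ∉ G) ∧
      deg G 1 = n - 2 ∧ (∀ i ∈ Finset.Icc 2 (k - 1), deg G i = n - 3) ∧
      deg G k < n - 2})
    (hstep : ∀ i, k + 1 ≤ i → i ≤ n →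
      A i = A (i - 1) \
        {G ∈ A (i - 1) | G.erase s(k, i) ∈ A (i - 1) ∧ insert s(k, i) G ∈ A (i - 1)}) :
    let B : Set (Finset (Sym2 ℕ)) :=
      {G ∈ A k | s(k, k + 1) ∉ G ∧ deg G (k + 1) < n - 2 ∧ deg G k = n - 3}
    let C : Set (Finset (Sym2 ℕ)) :=
      {G ∈ A k | ∀ i ∈ Finset.Icc (k + 1) n, s(k, i) ∉ G ∧ deg G i = n - 2}
    A n = B ∪ C ∧ Disjoint B C :=
  step_k_critical_cells_general n k hk hkn A hAk hstep
end

section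
/- Let n ≥ 2 and 1 ≤ k ≤ n−1. Set H_{k,0} = {G ∈ M_{n−1}(K_{n,n}) : {a_i,b_1} ∉ G and deg_G(a_i) = n−1 for every i ∈ [k−1], and deg_G(b_1) < n−k+1}, and for j = 1,...,n define N_{k,j} = {G ∈ H_{k,j−1} : G ∖ {{a_k,b_j}} ∈ H_{k,j−1} and G ∪ {{a_k,b_j}} ∈ H_{k,j−1}} and H_{k,j} = H_{k,j−1} ∖ N_{k,j}. Then H_{k,n} = {G ∈ M_{n−1}(K_{n,n}) : {a_i,b_1} ∉ G and deg_G(a_i) = n−1 for every i ∈ [k], and deg_G(b_1) < n−k}. -/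
/-- Vertices of complete bipartite graphs: `Sum.inl i` is the vertex `a_i`,
`Sum.inr j` is the vertex `b_j`. -/
abbrev BipV : Type := ℕ ⊕ ℕ

/-- Degree of vertex `v` in the edge set `H`. -/
def degB (H : Finset (Sym2 BipV)) (v : BipV) : ℕ := (H.filter (fun e => v ∈ e)).card

/-- Edge set of the complete bipartite graph `K_{m,n}`:
all edges `{a_i, b_j}` with `i ∈ [m]`, `j ∈ [n]`. -/
def EKbip (m n : ℕ) : Finset (Sym2 BipV) :=
  ((Finset.Icc 1 m) ×ˢ (Finset.Icc 1 n)).image (fun p => s(Sum.inl p.1, Sum.inr p.2))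

/-- The `r`-matching complex of `K_{m,n}`, as its set of faces. -/
def MBip (m n r : ℕ) : Set (Finset (Sym2 BipV)) :=
  {H | H ⊆ EKbip m n ∧ ∀ v, degB H v ≤ r}

/-!
Write `e_j = {a_k, b_j}`. The matching with `e_1` keeps a graph `G ∈ H_{k,0}` only if
`e_1 ∉ G` and `e_1` cannot be added, i.e. either the row `a_k` is saturated
(`deg a_k = n - 1`, and then `deg b_1 < n - k`) or `deg b_1 = n - k`. By induction on `j`,
the survivors of the first `j` matchings are the graphs avoiding `e_1` of the first kind,
together with those of the second kind whose columns `b_2, …, b_j` are saturated by edges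
other than `e_2, …, e_j`: a row-saturated graph can neither gain nor lose `e_j` inside the
family, while a graph of the second kind is matched by `e_j` unless `e_j ∉ G` and `b_j` is
already saturated. After `j = n` the second kind is empty, since a neighbour `a_i ≠ a_k` of
`b_1` would then be adjacent to all of `b_1, …, b_n`. What remains is `H_{k+1,0}`.
-/

open Finset

section UnmatchedBy

variable {α : Type*} [DecidableEq α]

/-- The faces of `F` left unmatched by the element matching with `e`. -/
def unmatchedBy (F : Set (Finset α)) (e : α) : Set (Finset α) :=
  F \ {G ∈ F | G.erase e ∈ F ∧ insert e G ∈ F}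

theorem mem_unmatchedBy {F : Set (Finset α)} {e : α} {G : Finset α} :
    G ∈ unmatchedBy F e ↔ G ∈ F ∧ (e ∈ G → G.erase e ∉ F) ∧ (e ∉ G → insert e G ∉ F) := by
  simp only [unmatchedBy, Set.mem_sdiff, Set.mem_sep_iff]
  by_cases he : e ∈ G
  · rw [insert_eq_self.2 he]
    tauto
  · rw [erase_eq_of_notMem he]
    tauto

end UnmatchedBy

def bipEdge (i j : ℕ) : Sym2 BipV := s(Sum.inl i, Sum.inr j)

@[simp]
theorem inl_mem_bipEdge {i a b : ℕ} : (Sum.inl i : BipV) ∈ bipEdge a b ↔ i = a := by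
  simp [bipEdge]

@[simp]
theorem inr_mem_bipEdge {j a b : ℕ} : (Sum.inr j : BipV) ∈ bipEdge a b ↔ j = b := by
  simp [bipEdge]

@[simp]
theorem bipEdge_inj {a b c d : ℕ} : bipEdge a b = bipEdge c d ↔ a = c ∧ b = d := by
  simp [bipEdge]

theorem mem_EKbip {m n : ℕ} {e : Sym2 BipV} :
    e ∈ EKbip m n ↔ ∃ a ∈ Icc 1 m, ∃ b ∈ Icc 1 n, bipEdge a b = e := by
  simp only [EKbip, mem_image, mem_product, Prod.exists, bipEdge]
  grind

@[simp]
theorem bipEdge_mem_EKbip {m n a b : ℕ} :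
    bipEdge a b ∈ EKbip m n ↔ a ∈ Icc 1 m ∧ b ∈ Icc 1 n := by
  simp [mem_EKbip]

section Degree

variable {m n : ℕ} {G : Finset (Sym2 BipV)} {e : Sym2 BipV} {v : BipV}

theorem degB_insert (he : e ∉ G) (hv : v ∈ e) : degB (insert e G) v = degB G v + 1 := by
  rw [degB, filter_insert, if_pos hv, card_insert_of_notMem (fun h => he (mem_filter.1 h).1)]
  rfl

theorem degB_insert_of_notMem (hv : v ∉ e) : degB (insert e G) v = degB G v := by
  rw [degB, filter_insert, if_neg hv]
  rfl

theorem degB_erase_add_one (he : e ∈ G) (hv : v ∈ e) : degB (G.erase e) v + 1 = degB G v := by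
  rw [degB, filter_erase, card_erase_add_one (mem_filter.2 ⟨he, hv⟩)]
  rfl

theorem degB_erase_of_notMem (hv : v ∉ e) : degB (G.erase e) v = degB G v := by
  rw [degB, filter_erase, erase_eq_of_notMem (a := e) (fun h => hv (mem_filter.1 h).2)]
  rfl

theorem degB_mono {G' : Finset (Sym2 BipV)} (h : G ⊆ G') (v : BipV) : degB G v ≤ degB G' v :=
  card_le_card (filter_subset_filter _ h)

theorem degB_inl_eq_card (hG : G ⊆ EKbip m n) (i : ℕ) :
    degB G (Sum.inl i) = #{t ∈ Icc 1 n | bipEdge i t ∈ G} := by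
  refine (card_nbij (bipEdge i) (fun t ht => ?_) (fun s _ t _ h => (bipEdge_inj.1 h).2)
    (fun e he => ?_)).symm
  · exact mem_filter.2 ⟨(mem_filter.1 ht).2, inl_mem_bipEdge.2 rfl⟩
  · obtain ⟨heG, hie⟩ := mem_filter.1 he
    obtain ⟨a, -, b, hb, rfl⟩ := mem_EKbip.1 (hG heG)
    obtain rfl := inl_mem_bipEdge.1 hie
    exact ⟨b, mem_filter.2 ⟨hb, heG⟩, rfl⟩

theorem degB_inr_eq_card (hG : G ⊆ EKbip m n) (j : ℕ) :
    degB G (Sum.inr j) = #{s ∈ Icc 1 m | bipEdge s j ∈ G} := by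
  refine (card_nbij (bipEdge · j) (fun s hs => ?_) (fun s _ t _ h => (bipEdge_inj.1 h).1)
    (fun e he => ?_)).symm
  · exact mem_filter.2 ⟨(mem_filter.1 hs).2, inr_mem_bipEdge.2 rfl⟩
  · obtain ⟨heG, hje⟩ := mem_filter.1 he
    obtain ⟨a, ha, b, -, rfl⟩ := mem_EKbip.1 (hG heG)
    obtain rfl := inr_mem_bipEdge.1 hje
    exact ⟨a, mem_filter.2 ⟨ha, heG⟩, rfl⟩

theorem card_filter_add_card_le {α : Type*} {U S : Finset α} {p : α → Prop} [DecidablePred p]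
    (hS : S ⊆ U) (hSp : ∀ t ∈ S, ¬p t) : #{t ∈ U | p t} + #S ≤ #U := by
  rw [← card_filter_add_card_filter_not (s := U) p]
  exact Nat.add_le_add_left (card_le_card fun t ht => mem_filter.2 ⟨hS ht, hSp t ht⟩) _

theorem degB_inl_add_card_le (hG : G ⊆ EKbip m n) {i : ℕ} {S : Finset ℕ} (hS : S ⊆ Icc 1 n)
    (hSG : ∀ t ∈ S, bipEdge i t ∉ G) : degB G (Sum.inl i) + #S ≤ n := by
  simpa [degB_inl_eq_card hG] using card_filter_add_card_le hS hSG

theorem degB_inr_add_card_le (hG : G ⊆ EKbip m n) {j : ℕ} {S : Finset ℕ} (hS : S ⊆ Icc 1 m)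
    (hSG : ∀ s ∈ S, bipEdge s j ∉ G) : degB G (Sum.inr j) + #S ≤ m := by
  simpa [degB_inr_eq_card hG] using card_filter_add_card_le hS hSG

theorem degB_inl_of_forall_mem (hG : G ⊆ EKbip m n) {i : ℕ}
    (h : ∀ t ∈ Icc 1 n, bipEdge i t ∈ G) : degB G (Sum.inl i) = n := by
  simp [degB_inl_eq_card hG, filter_true_of_mem h]

end Degree

section Step

variable {n k j : ℕ} {G : Finset (Sym2 BipV)}

-- `startFamily n k` is `H_{k,0}`, and `stepFamily n k j` is `H_{k,j}` for `1 ≤ j ≤ n`.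
def startFamily (n k : ℕ) : Set (Finset (Sym2 BipV)) :=
  {G ∈ MBip n n (n - 1) |
    (∀ i ∈ Icc 1 (k - 1), bipEdge i 1 ∉ G ∧ degB G (Sum.inl i) = n - 1) ∧
    degB G (Sum.inr 1) < n - k + 1}

def RowSaturated (n k : ℕ) (G : Finset (Sym2 BipV)) : Prop :=
  degB G (Sum.inl k) = n - 1 ∧ degB G (Sum.inr 1) < n - k

def ColsSaturated (n k j : ℕ) (G : Finset (Sym2 BipV)) : Prop :=
  degB G (Sum.inr 1) = n - k ∧ ∀ t ∈ Icc 2 j, bipEdge k t ∉ G ∧ degB G (Sum.inr t) = n - 1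

def stepFamily (n k j : ℕ) : Set (Finset (Sym2 BipV)) :=
  {G ∈ startFamily n k | bipEdge k 1 ∉ G ∧ (RowSaturated n k G ∨ ColsSaturated n k j G)}

theorem ColsSaturated.mono {i : ℕ} (hij : i ≤ j) (h : ColsSaturated n k j G) :
    ColsSaturated n k i G :=
  ⟨h.1, fun t ht => h.2 t (Icc_subset_Icc_right hij ht)⟩

theorem erase_mem_startFamily (hG : G ∈ startFamily n k) (j : ℕ) :
    G.erase (bipEdge k j) ∈ startFamily n k := by
  obtain ⟨⟨hE, hdeg⟩, hrows, hb⟩ := hG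
  refine ⟨⟨(erase_subset _ _).trans hE, fun v => ?_⟩, fun i hi => ?_, ?_⟩
  · exact (degB_mono (erase_subset _ _) v).trans (hdeg v)
  · have hik : i ≠ k := by grind
    rw [degB_erase_of_notMem (by simpa using hik)]
    exact ⟨fun h => (hrows i hi).1 (mem_of_mem_erase h), (hrows i hi).2⟩
  · exact (degB_mono (erase_subset _ _) _).trans_lt hb

theorem insert_mem_startFamily_iff (hk : k ∈ Icc 1 n) (hj : j ∈ Icc 1 n)
    (hG : G ∈ startFamily n k) (he : bipEdge k j ∉ G) :
    insert (bipEdge k j) G ∈ startFamily n k ↔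
      degB G (Sum.inl k) < n - 1 ∧ degB G (Sum.inr j) < n - 1 ∧
        (j = 1 → degB G (Sum.inr 1) < n - k) := by
  obtain ⟨⟨hE, hdeg⟩, hrows, hb⟩ := hG
  have hak := degB_insert (v := Sum.inl k) he (by simp)
  have hbj := degB_insert (v := Sum.inr j) he (by simp)
  constructor
  · rintro ⟨⟨-, hdeg'⟩, -, hb'⟩
    refine ⟨by grind, by grind, ?_⟩
    rintro rfl
    omega
  · rintro ⟨hak', hbj', hb1⟩
    refine ⟨⟨insert_subset (by simp [hk, hj]) hE, fun v => ?_⟩, fun i hi => ?_, ?_⟩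
    · by_cases hv : v ∈ bipEdge k j
      · rcases Sym2.mem_iff.1 hv with rfl | rfl <;> omega
      · exact (degB_insert_of_notMem hv).trans_le (hdeg v)
    · have hik : i ≠ k := by grind
      rw [degB_insert_of_notMem (by simpa using hik)]
      simpa [hik] using hrows i hi
    · by_cases hj1 : j = 1
      · subst hj1
        omega
      · rw [degB_insert_of_notMem (by simpa using Ne.symm hj1)]
        exact hb

theorem insert_notMem_startFamily {e : Sym2 BipV} {v : BipV} (he : e ∉ G) (hv : v ∈ e)
    (hdeg : degB G v = n - 1) : insert e G ∉ startFamily n k := fun h => by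
  have := h.1.2 v
  rw [degB_insert he hv] at this
  omega

theorem colsSaturated_iff_of_erase_eq {G' : Finset (Sym2 BipV)} {s : ℕ} (hs : s ≠ 1)
    (hjs : j < s)
    (h : G'.erase (bipEdge k s) = G.erase (bipEdge k s)) :
    ColsSaturated n k j G' ↔ ColsSaturated n k j G := by
  have hdeg : ∀ t, t ≠ s → degB G' (Sum.inr t) = degB G (Sum.inr t) := fun t ht => by
    rw [← degB_erase_of_notMem (e := bipEdge k s) (by simpa using ht), h,
      degB_erase_of_notMem (by simpa using ht)]
  have hmem : ∀ t, t ≠ s → (bipEdge k t ∈ G' ↔ bipEdge k t ∈ G) := fun t ht => by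
    simpa [ht] using congrArg (bipEdge k t ∈ ·) h
  unfold ColsSaturated
  rw [hdeg 1 hs.symm]
  refine and_congr_right' (forall₂_congr fun t ht => ?_)
  have hts : t ≠ s := by grind
  rw [hmem t hts, hdeg t hts]

theorem unmatchedBy_startFamily (hk : k ∈ Icc 1 n) :
    unmatchedBy (startFamily n k) (bipEdge k 1) = stepFamily n k 1 := by
  have h1 : 1 ∈ Icc 1 n := by grind
  ext G
  rw [mem_unmatchedBy]
  constructor
  · rintro ⟨hG, herase, hinsert⟩
    have he : bipEdge k 1 ∉ G := fun he => herase he (erase_mem_startFamily hG 1)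
    have hstuck := mt (insert_mem_startFamily_iff hk h1 hG he).2 (hinsert he)
    have hak := hG.1.2 (Sum.inl k)
    have hb := hG.2.2
    refine ⟨hG, he, ?_⟩
    by_cases hb1 : degB G (Sum.inr 1) = n - k
    · exact .inr ⟨hb1, fun t ht => by grind⟩
    · exact .inl ⟨by grind, by omega⟩
  · rintro ⟨hG, he, hrow | hcols⟩
    · exact ⟨hG, (absurd · he), fun _ => insert_notMem_startFamily he (by simp) hrow.1⟩
    · refine ⟨hG, (absurd · he), fun _ h => ?_⟩
      have := ((insert_mem_startFamily_iff hk h1 hG he).1 h).2.2 rfl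
      exact this.ne hcols.1

theorem unmatchedBy_stepFamily_subset (hk : k ∈ Icc 1 n) (hj : 1 ≤ j) (hjn : j + 1 ≤ n) :
    unmatchedBy (stepFamily n k j) (bipEdge k (j + 1)) ⊆ stepFamily n k (j + 1) := by
  intro G hGj
  obtain ⟨⟨hG, hk1, hrow | hcols⟩, herase, hinsert⟩ := mem_unmatchedBy.1 hGj
  · exact ⟨hG, hk1, .inl hrow⟩
  have he : bipEdge k (j + 1) ∉ G := fun he => herase he
    ⟨erase_mem_startFamily hG _, fun h => hk1 (mem_of_mem_erase h),
      .inr ((colsSaturated_iff_of_erase_eq (by omega) (by omega) erase_idem).2 hcols)⟩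
  have hbj : degB G (Sum.inr (j + 1)) = n - 1 := by
    by_contra hbj
    have hak := degB_inl_add_card_le (i := k) (S := {1, j + 1}) hG.1.1 (by grind) (by grind)
    have hbj' := hG.1.2 (Sum.inr (j + 1))
    rw [card_pair (by omega)] at hak
    refine hinsert he ⟨(insert_mem_startFamily_iff hk (by grind) hG he).2
      ⟨by omega, by omega, by omega⟩, by simpa [hk1] using (by omega : j ≠ 0), .inr ?_⟩
    exact (colsSaturated_iff_of_erase_eq (by omega) (by omega)
      (erase_insert_eq_erase _ _)).2 hcols
  refine ⟨hG, hk1, .inr ⟨hcols.1, fun t ht => ?_⟩⟩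
  rcases eq_or_ne t (j + 1) with rfl | htj
  · exact ⟨he, hbj⟩
  · exact hcols.2 t (by grind)

theorem stepFamily_subset_unmatchedBy (hj : 1 ≤ j) :
    stepFamily n k (j + 1) ⊆ unmatchedBy (stepFamily n k j) (bipEdge k (j + 1)) := by
  rintro G ⟨hG, hk1, hrow | hcols⟩ <;> rw [mem_unmatchedBy]
  · refine ⟨⟨hG, hk1, .inl hrow⟩, fun he h => ?_,
      fun he => insert_notMem_startFamily he (by simp) hrow.1 ∘ And.left⟩
    have hak := degB_erase_add_one (v := Sum.inl k) he (by simp)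
    have hb1 := degB_erase_of_notMem (G := G) (v := Sum.inr 1) (e := bipEdge k (j + 1))
      (by simp; omega)
    rcases h.2.2 with hrow' | hcols' <;> grind [RowSaturated, ColsSaturated]
  · obtain ⟨he, hbj⟩ := hcols.2 (j + 1) (by grind)
    exact ⟨⟨hG, hk1, .inr (hcols.mono (by omega))⟩, (absurd · he),
      fun _ => insert_notMem_startFamily he (by simp) hbj ∘ And.left⟩

theorem unmatchedBy_stepFamily (hk : k ∈ Icc 1 n) (hj : 1 ≤ j) (hjn : j + 1 ≤ n) :
    unmatchedBy (stepFamily n k j) (bipEdge k (j + 1)) = stepFamily n k (j + 1) :=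
  (unmatchedBy_stepFamily_subset hk hj hjn).antisymm (stepFamily_subset_unmatchedBy hj)

theorem not_colsSaturated_last (hk1 : 1 ≤ k) (hk : k < n) (hG : G ∈ startFamily n k)
    (hkG : bipEdge k 1 ∉ G) :
    ¬ ColsSaturated n k n G := by
  rintro ⟨hb1, hcols⟩
  have hpos : 0 < #{s ∈ Icc 1 n | bipEdge s 1 ∈ G} := degB_inr_eq_card hG.1.1 1 ▸ by omega
  obtain ⟨a, ha⟩ := card_pos.1 hpos
  rw [mem_filter] at ha
  obtain ⟨ha, haG⟩ := ha
  have hak : a ≠ k := by rintro rfl; exact hkG haG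
  -- each column `b_t` with `t ≥ 2` misses only `a_k`, so the row `a_a` is complete
  have hrow : ∀ t ∈ Icc 1 n, bipEdge a t ∈ G := by
    intro t ht
    rcases eq_or_ne t 1 with rfl | ht1
    · exact haG
    by_contra hat
    have hcol := degB_inr_add_card_le (j := t) (S := {k, a}) hG.1.1 (by grind) (by grind)
    rw [card_pair (Ne.symm hak), (hcols t (by grind)).2] at hcol
    omega
  have := hG.1.2 (Sum.inl a)
  rw [degB_inl_of_forall_mem hG.1.1 hrow] at this
  omega

theorem stepFamily_last (hk1 : 1 ≤ k) (hk : k < n) : stepFamily n k n = startFamily n (k + 1) := by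
  ext G
  constructor
  · rintro ⟨hG, hk1G, hrow | hcols⟩
    · refine ⟨hG.1, fun i hi => ?_, by have := hrow.2; omega⟩
      rcases eq_or_ne i k with rfl | hik
      · exact ⟨hk1G, hrow.1⟩
      · exact hG.2.1 i (by grind)
    · exact absurd hcols (not_colsSaturated_last hk1 hk hG hk1G)
  · rintro ⟨hM, hrows, hb⟩
    have hkk := hrows k (by grind)
    exact ⟨⟨hM, fun i hi => hrows i (by grind), by omega⟩, hkk.1, .inl ⟨hkk.2, by omega⟩⟩

end Step

theorem bipartite_step_k_general (n k : ℕ) (hk1 : 1 ≤ k) (hkn : k ≤ n - 1)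
    (H : ℕ → Set (Finset (Sym2 BipV)))
    (hH0 : H 0 = {G ∈ MBip n n (n - 1) |
      (∀ i ∈ Finset.Icc 1 (k - 1),
        s(Sum.inl i, Sum.inr 1) ∉ G ∧ degB G (Sum.inl i) = n - 1) ∧
      degB G (Sum.inr 1) < n - k + 1})
    (hstep : ∀ j, 1 ≤ j → j ≤ n →
      H j = H (j - 1) \
        {G ∈ H (j - 1) | G.erase s(Sum.inl k, Sum.inr j) ∈ H (j - 1) ∧
          insert s(Sum.inl k, Sum.inr j) G ∈ H (j - 1)}) :
    H n = {G ∈ MBip n n (n - 1) |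
      (∀ i ∈ Finset.Icc 1 k,
        s(Sum.inl i, Sum.inr 1) ∉ G ∧ degB G (Sum.inl i) = n - 1) ∧
      degB G (Sum.inr 1) < n - k} := by
  have hk : k ∈ Icc 1 n := mem_Icc.2 ⟨hk1, by omega⟩
  have hstep' : ∀ j, 1 ≤ j → j ≤ n → H j = unmatchedBy (H (j - 1)) (bipEdge k j) := hstep
  have hH : ∀ j, 1 ≤ j → j ≤ n → H j = stepFamily n k j := by
    intro j hj
    induction j, hj using Nat.le_induction with
    | base =>
      intro h1n
      rw [hstep' 1 le_rfl h1n, Nat.sub_self, hH0]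
      exact unmatchedBy_startFamily hk
    | succ j hj ih =>
      intro hjn
      rw [hstep' (j + 1) (by omega) hjn, Nat.add_sub_cancel, ih (by omega)]
      exact unmatchedBy_stepFamily hk hj hjn
  rw [hH n (by omega) le_rfl, stepFamily_last hk1 (by omega), startFamily, Nat.add_sub_cancel,
    show n - (k + 1) + 1 = n - k by omega]
  rfl

/-- Step k for `K_{n,n}` (1 ≤ k ≤ n-1): starting from
`H_{k,0} = {G ∈ M_{n-1}(K_{n,n}) : {a_i,b_1} ∉ G and deg_G(a_i) = n-1 for i ∈ [k-1],
deg_G(b_1) < n-k+1}` and performing, for `j = 1, …, n`, the element matching using the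
vertex `{a_k, b_j}`, the remaining set of critical cells is
`H_{k,n} = {G ∈ M_{n-1}(K_{n,n}) : {a_i,b_1} ∉ G and deg_G(a_i) = n-1 for i ∈ [k],
deg_G(b_1) < n-k}`. -/
theorem bipartite_step_k (n k : ℕ) (hn : 2 ≤ n) (hk1 : 1 ≤ k) (hkn : k ≤ n - 1)
    (H : ℕ → Set (Finset (Sym2 BipV)))
    (hH0 : H 0 = {G ∈ MBip n n (n - 1) |
      (∀ i ∈ Finset.Icc 1 (k - 1),
        s(Sum.inl i, Sum.inr 1) ∉ G ∧ degB G (Sum.inl i) = n - 1) ∧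
      degB G (Sum.inr 1) < n - k + 1})
    (hstep : ∀ j, 1 ≤ j → j ≤ n →
      H j = H (j - 1) \
        {G ∈ H (j - 1) | G.erase s(Sum.inl k, Sum.inr j) ∈ H (j - 1) ∧
          insert s(Sum.inl k, Sum.inr j) G ∈ H (j - 1)}) :
    H n = {G ∈ MBip n n (n - 1) |
      (∀ i ∈ Finset.Icc 1 k,
        s(Sum.inl i, Sum.inr 1) ∉ G ∧ degB G (Sum.inl i) = n - 1) ∧
      degB G (Sum.inr 1) < n - k} :=
  bipartite_step_k_general n k hk1 hkn H hH0 hstep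
end
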